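/- arXiv:1502.06722 — 2 statements merged into one kernel-verified Lean document; each statement's English description precedes it below -/
import Mathlib

section
/- For k ≥ 2, consider the action of the lamplighter group L_k on the ring of formal power series ℤ/kℤ[[t]] given by c·F = F + 1 and b·F = (1+t)F. For all but countably many F ∈ ℤ/kℤ[[t]], the stabilizer of F in L_k is trivial. -/
open scoped commutatorElement in
/-- Relators of the standard presentation `⟨b, c | cᵏ, [c, bⁿcb⁻ⁿ]⟩` of the lamplighter
group `ℤ/kℤ ≀ ℤ`, over the alphabet `Bool` with `b = of true` and `c = of false`. -/
def llRels (k : ℕ) : Set (FreeGroup Bool) :=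
  {(FreeGroup.of false) ^ k} ∪
    ⋃ n : ℕ, {⁅FreeGroup.of false,
      (FreeGroup.of true) ^ n * FreeGroup.of false * ((FreeGroup.of true)⁻¹) ^ n⁆}

/-- The lamplighter group `L_k = ℤ/kℤ ≀ ℤ`, via its standard presentation. -/
abbrev Lamplighter (k : ℕ) := PresentedGroup (llRels k)

/-- The generator `b` (the shift). -/
def llb (k : ℕ) : Lamplighter k := PresentedGroup.of true

/-- The generator `c` (the lamp at position 0). -/
def llc (k : ℕ) : Lamplighter k := PresentedGroup.of false

/-!
Every element of `L_k` can be written as `g = (∏ₙ lamp n ^ aₙ) * bⁱ`, and then acts by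
`F ↦ (1+t)ⁱ F + p(1+t)` with `p = ∑ aₙ Tⁿ` a Laurent polynomial over `ℤ/kℤ`. If `i = 0`
and `g` has a fixed point then `p(1+t) = 0`, which forces `p = 0` (after clearing
denominators, `p(1+t)` is a Taylor shift of a polynomial), so `g = 1`. If `i ≠ 0`, two fixed
points differ by some `D` with `((1+t)^|i| - 1) D = 0`; since `(1+t)^m - 1` is nonzero modulo
every prime, a Gauss-lemma induction over the prime factors of `k` shows that it is not a zero
divisor in `ℤ/kℤ[[t]]`, so `D = 0`. Hence each `g ≠ 1` fixes at most one series, and `L_k` is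
countable.
-/

theorem apply_zpow_eq_zpow_smul {G M α : Type*} [Group G] [Group M] [MulAction M α]
    (φ : G →* Equiv.Perm α) {x : G} {m : M} (h : ∀ a, φ x a = m • a) (j : ℤ) (a : α) :
    φ (x ^ j) a = m ^ j • a := by
  rw [map_zpow, show φ x = MulAction.toPerm m from Equiv.ext h, ← MulAction.toPermHom_apply,
    ← map_zpow]
  rfl

namespace PowerSeries

theorem coeff_one_add_X_pow_sub_one {R : Type*} [Ring R] {m : ℕ} (hm : m ≠ 0) :
    coeff m ((1 + X : R⟦X⟧) ^ m - 1) = 1 := by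
  have h : (1 + X : R⟦X⟧) ^ m = ((1 + Polynomial.X) ^ m : Polynomial R) := by simp
  rw [map_sub, h, Polynomial.coeff_coe, Polynomial.coeff_one_add_X_pow, Nat.choose_self,
    coeff_one, if_neg hm, Nat.cast_one, sub_zero]

theorem natCast_dvd_iff_map_eq_zero (n : ℕ) (H : ℤ⟦X⟧) :
    (n : ℤ⟦X⟧) ∣ H ↔ map (Int.castRingHom (ZMod n)) H = 0 := by
  constructor
  · rintro ⟨G, rfl⟩
    rw [map_mul, map_natCast, ← map_natCast C, ZMod.natCast_self, map_zero, zero_mul]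
  · intro h
    refine ⟨mk fun j => coeff j H / n, ?_⟩
    ext j
    have hj : (n : ℤ) ∣ coeff j H := by
      simpa [ZMod.intCast_zmod_eq_zero_iff_dvd] using congr(coeff j $h)
    rw [← map_natCast C, coeff_C_mul, coeff_mk, Int.mul_ediv_cancel' hj]

theorem natCast_dvd_of_dvd_mul {w : ℤ⟦X⟧}
    (hw : ∀ p : ℕ, p.Prime → map (Int.castRingHom (ZMod p)) w ≠ 0) (k : ℕ) {F : ℤ⟦X⟧}
    (h : (k : ℤ⟦X⟧) ∣ w * F) : (k : ℤ⟦X⟧) ∣ F := by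
  induction k using induction_on_primes generalizing F with
  | zero =>
    have hw0 : w ≠ 0 := fun h0 => hw 2 Nat.prime_two (by rw [h0, map_zero])
    rw [Nat.cast_zero, zero_dvd_iff] at h ⊢
    exact (mul_eq_zero.mp h).resolve_left hw0
  | one => simp
  | prime_mul p a hp ih =>
    have : Fact p.Prime := ⟨hp⟩
    rw [Nat.cast_mul] at h ⊢
    have hpF : (p : ℤ⟦X⟧) ∣ F := by
      have hpwF : (p : ℤ⟦X⟧) ∣ w * F := dvd_of_mul_right_dvd h
      rw [natCast_dvd_iff_map_eq_zero, map_mul] at hpwF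
      rw [natCast_dvd_iff_map_eq_zero]
      exact (mul_eq_zero.mp hpwF).resolve_left (hw p hp)
    obtain ⟨G, rfl⟩ := hpF
    rw [mul_left_comm, mul_dvd_mul_iff_left
      (fun h0 => hp.ne_zero (by simpa using congr(constantCoeff $h0)))] at h
    exact mul_dvd_mul_left _ (ih h)

theorem eq_zero_of_map_mul_eq_zero {k : ℕ} {w : ℤ⟦X⟧}
    (hw : ∀ p : ℕ, p.Prime → map (Int.castRingHom (ZMod p)) w ≠ 0) {F : (ZMod k)⟦X⟧}
    (h : map (Int.castRingHom (ZMod k)) w * F = 0) : F = 0 := by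
  obtain ⟨G, rfl⟩ := map_surjective (Int.castRingHom _) ZMod.intCast_surjective F
  rw [← map_mul, ← natCast_dvd_iff_map_eq_zero] at h
  rw [← natCast_dvd_iff_map_eq_zero]
  exact natCast_dvd_of_dvd_mul hw k h

theorem eq_zero_of_one_add_X_pow_mul_eq_self {k m : ℕ} (hm : m ≠ 0) {F : (ZMod k)⟦X⟧}
    (h : (1 + X) ^ m * F = F) : F = 0 := by
  refine eq_zero_of_map_mul_eq_zero (w := (1 + X) ^ m - 1) (fun p hp h0 => ?_) ?_
  · have : Fact p.Prime := ⟨hp⟩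
    have h1 := congr(coeff m $h0)
    rw [map_sub, map_pow, map_add, map_one, map_X, coeff_one_add_X_pow_sub_one hm,
      map_zero] at h1
    exact one_ne_zero h1
  · simp [sub_mul, h]

theorem eq_zero_of_zpow_mul_eq_self {k : ℕ} {u : (ZMod k)⟦X⟧ˣ} (hu : (u : (ZMod k)⟦X⟧) = 1 + X)
    {i : ℤ} (hi : i ≠ 0) {D : (ZMod k)⟦X⟧} (h : ↑(u ^ i) * D = D) : D = 0 := by
  suffices ∃ n : ℕ, n ≠ 0 ∧ ↑(u ^ n) * D = D by
    obtain ⟨n, hn, hD⟩ := this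
    exact eq_zero_of_one_add_X_pow_mul_eq_self hn (by rwa [← hu, ← Units.val_pow_eq_pow_val])
  obtain ⟨n, rfl | rfl⟩ := Int.eq_nat_or_neg i
  · exact ⟨n, by omega, by rwa [← zpow_natCast]⟩
  · refine ⟨n, by omega, ?_⟩
    nth_rewrite 1 [← h]
    rw [← mul_assoc, ← Units.val_mul, ← zpow_natCast, ← zpow_add, add_neg_cancel, zpow_zero,
      Units.val_one, one_mul]

end PowerSeries

namespace LaurentPolynomial

open PowerSeries

variable {R : Type*} [CommRing R]

theorem smeval_eq_eval₂ (p : R[T;T⁻¹]) (u : R⟦X⟧ˣ) : p.smeval u = eval₂ PowerSeries.C u p := by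
  induction p using LaurentPolynomial.induction_on' with
  | add p q hp hq => rw [smeval_add, map_add, hp, hq]
  | C_mul_T n a => rw [smeval_C_mul_T_n, eval₂_C_mul_T, PowerSeries.smul_eq_C_mul]

theorem eq_zero_of_smeval_one_add_X_eq_zero {u : R⟦X⟧ˣ} (hu : (u : R⟦X⟧) = 1 + X)
    {p : R[T;T⁻¹]} (h : p.smeval u = 0) : p = 0 := by
  obtain ⟨n, q, hq⟩ := p.exists_T_pow
  have h_taylor : ((Polynomial.taylor 1 q : Polynomial R) : R⟦X⟧) = 0 := by
    calc ((Polynomial.taylor 1 q : Polynomial R) : R⟦X⟧)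
        = Polynomial.eval₂ PowerSeries.C ↑u q := by
          rw [Polynomial.taylor_apply, Polynomial.comp,
            ← Polynomial.coeToPowerSeries.ringHom_apply, Polynomial.hom_eval₂, hu, add_comm]
          congr 1
          · ext; simp
          · simp
      _ = eval₂ PowerSeries.C u p * ↑(u ^ (n : ℤ)) := by
          rw [← eval₂_toLaurent, hq, map_mul, eval₂_T]
      _ = 0 := by rw [← smeval_eq_eval₂, h, zero_mul]
  have hq0 : q = 0 := Polynomial.taylor_injective 1 (by simpa using h_taylor)
  rw [hq0, map_zero] at hq
  exact (isUnit_T (n : ℤ)).mul_left_eq_zero.mp hq.symm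

end LaurentPolynomial

namespace Lamplighter

open LaurentPolynomial PowerSeries

variable {k : ℕ}
def lamp (k : ℕ) (n : ℤ) : Lamplighter k := MulAut.conj (llb k ^ n) (llc k)

theorem lamp_zero : lamp k 0 = llc k := by simp [lamp]

theorem lamp_add (m n : ℤ) : lamp k (m + n) = MulAut.conj (llb k ^ m) (lamp k n) := by
  simp only [lamp, zpow_add, map_mul, MulAut.mul_apply]

theorem llc_pow_card : llc k ^ k = 1 := by
  have h := PresentedGroup.one_of_mem (rels := llRels k) (Or.inl rfl)
  rwa [map_pow] at h

open scoped commutatorElement in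
theorem commute_llc_lamp_natCast (n : ℕ) : Commute (llc k) (lamp k n) := by
  have h := PresentedGroup.one_of_mem (rels := llRels k) (Or.inr (Set.mem_iUnion.mpr ⟨n, rfl⟩))
  rw [map_commutatorElement, commutatorElement_eq_one_iff_commute, map_mul, map_mul, map_pow,
    map_pow, map_inv, inv_pow] at h
  rwa [lamp, MulAut.conj_apply, zpow_natCast]

theorem commute_llc_lamp (n : ℤ) : Commute (llc k) (lamp k n) := by
  obtain ⟨n, rfl | rfl⟩ := Int.eq_nat_or_neg n
  · exact commute_llc_lamp_natCast n
  · have h := (commute_llc_lamp_natCast (k := k) n).symm.map (MulAut.conj (llb k ^ (-n : ℤ)))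
    rwa [← lamp_add, neg_add_cancel, lamp_zero] at h

theorem commute_lamp (m n : ℤ) : Commute (lamp k m) (lamp k n) := by
  have h := (commute_llc_lamp (k := k) (n - m)).map (MulAut.conj (llb k ^ m))
  rwa [← lamp_add, add_sub_cancel] at h

theorem lamp_pow_card (n : ℤ) : lamp k n ^ k = 1 := by
  rw [lamp, ← map_pow, llc_pow_card, map_one]

def lampSubgroup (k : ℕ) : Subgroup (Lamplighter k) := Subgroup.closure (Set.range (lamp k))

instance : IsMulCommutative (lampSubgroup k) :=
  Subgroup.isMulCommutative_closure <| by
    rintro _ ⟨m, rfl⟩ _ ⟨n, rfl⟩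
    exact commute_lamp m n

open scoped IsMulCommutative

noncomputable def lampZModHom (k : ℕ) (n : ℤ) : ZMod k →+ Additive (lampSubgroup k) :=
  ZMod.lift k ⟨zmultiplesHom _ (.ofMul ⟨lamp k n, Subgroup.subset_closure ⟨n, rfl⟩⟩), by
    rw [zmultiplesHom_apply, natCast_zsmul, ← ofMul_pow, ofMul_eq_zero]
    exact Subtype.ext (lamp_pow_card n)⟩

theorem lampZModHom_one (n : ℤ) : ((lampZModHom k n 1).toMul : Lamplighter k) = lamp k n := by
  rw [← Int.cast_one, lampZModHom, ZMod.lift_coe]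
  simp

-- `∑ aₙ Tⁿ ↦ ∏ lamp n ^ aₙ`, computed in the abelian subgroup generated by the lamps.
noncomputable def lampHom (k : ℕ) : (ZMod k)[T;T⁻¹] →+ Additive (lampSubgroup k) :=
  (Finsupp.liftAddHom (lampZModHom k)).comp AddMonoidAlgebra.coeffAddEquiv.toAddMonoidHom

noncomputable def lampProd (p : (ZMod k)[T;T⁻¹]) : Lamplighter k := (lampHom k p).toMul

theorem lampProd_zero : lampProd (0 : (ZMod k)[T;T⁻¹]) = 1 := by
  simp [lampProd]

theorem lampProd_T (n : ℤ) : lampProd (T n : (ZMod k)[T;T⁻¹]) = lamp k n := by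
  simp [lampProd, lampHom, T, -single_eq_C_mul_T, lampZModHom_one]

theorem lampProd_add (p q : (ZMod k)[T;T⁻¹]) : lampProd (p + q) = lampProd p * lampProd q := by
  simp [lampProd]

theorem lampProd_zsmul (j : ℤ) (p : (ZMod k)[T;T⁻¹]) : lampProd (j • p) = lampProd p ^ j := by
  rw [lampProd, map_zsmul, toMul_zsmul, Subgroup.coe_zpow, lampProd]

theorem lamp_zpow_mul_zpow (n j : ℤ) : lamp k n ^ j * llb k ^ n = llb k ^ n * llc k ^ j := by
  rw [lamp, ← map_zpow, MulAut.conj_apply, inv_mul_cancel_right]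

def HasNormalForm (φ : Lamplighter k →* Equiv.Perm (ZMod k)⟦X⟧) (u : (ZMod k)⟦X⟧ˣ)
    (g : Lamplighter k) : Prop :=
  ∃ (i : ℤ) (p : (ZMod k)[T;T⁻¹]),
    g = lampProd p * llb k ^ i ∧ ∀ F, φ g F = ↑(u ^ i) * F + p.smeval u

variable {φ : Lamplighter k →* Equiv.Perm (ZMod k)⟦X⟧} {u : (ZMod k)⟦X⟧ˣ}

theorem hasNormalForm_one : HasNormalForm φ u 1 :=
  ⟨0, 0, by rw [lampProd_zero, zpow_zero, one_mul], by simp⟩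

theorem HasNormalForm.mul_llb_zpow {g : Lamplighter k} (hg : HasNormalForm φ u g)
    (hb : ∀ F, φ (llb k) F = ↑u * F) (j : ℤ) : HasNormalForm φ u (g * llb k ^ j) := by
  obtain ⟨i, p, rfl, hg⟩ := hg
  refine ⟨i + j, p, by rw [mul_assoc, zpow_add], fun F => ?_⟩
  rw [map_mul, Equiv.Perm.mul_apply, hg, apply_zpow_eq_zpow_smul φ (m := u) hb, Units.smul_def,
    smul_eq_mul, ← mul_assoc, ← Units.val_mul, ← zpow_add]

theorem HasNormalForm.mul_llc_zpow {g : Lamplighter k} (hg : HasNormalForm φ u g)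
    (hc : ∀ F, φ (llc k) F = F + 1) (j : ℤ) : HasNormalForm φ u (g * llc k ^ j) := by
  obtain ⟨i, p, rfl, hg⟩ := hg
  refine ⟨i, p + j • T i, ?_, fun F => ?_⟩
  · rw [lampProd_add, lampProd_zsmul, lampProd_T, mul_assoc, mul_assoc, lamp_zpow_mul_zpow]
  · have hc_zpow : φ (llc k ^ j) F = j • 1 + F := by
      rw [apply_zpow_eq_zpow_smul φ (m := Multiplicative.ofAdd (1 : (ZMod k)⟦X⟧))
        (fun F => by rw [hc, add_comm]; rfl), ← ofAdd_zsmul, ofAdd_smul, vadd_eq_add]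
    have h_smeval : (j • T i : (ZMod k)[T;T⁻¹]).smeval u = j • ↑(u ^ i) := by
      simpa using map_zsmul (leval (ZMod k) u) j (T i)
    rw [map_mul, Equiv.Perm.mul_apply, hc_zpow, hg, smeval_add, h_smeval]
    simp only [zsmul_eq_mul]
    ring

theorem hasNormalForm (hc : ∀ F, φ (llc k) F = F + 1) (hb : ∀ F, φ (llb k) F = ↑u * F)
    (g : Lamplighter k) : HasNormalForm φ u g := by
  refine Subgroup.closure_induction_right (p := fun g _ => HasNormalForm φ u g) hasNormalForm_one
    ?_ ?_ (PresentedGroup.closure_range_of (llRels k) ▸ Subgroup.mem_top g)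
  · rintro g - _ ⟨s, rfl⟩ hg
    cases s
    · simpa [llc] using hg.mul_llc_zpow hc 1
    · simpa [llb] using hg.mul_llb_zpow hb 1
  · rintro g - _ ⟨s, rfl⟩ hg
    cases s
    · simpa [llc] using hg.mul_llc_zpow hc (-1)
    · simpa [llb] using hg.mul_llb_zpow hb (-1)

theorem eq_of_apply_eq_self_of_ne_one (hc : ∀ F, φ (llc k) F = F + 1) (hb : ∀ F, φ (llb k) F = (1 + X) * F)
    {g : Lamplighter k} (hg : g ≠ 1) {F₁ F₂ : (ZMod k)⟦X⟧} (h₁ : φ g F₁ = F₁)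
    (h₂ : φ g F₂ = F₂) : F₁ = F₂ := by
  obtain ⟨u, hu⟩ : ∃ u : (ZMod k)⟦X⟧ˣ, (u : (ZMod k)⟦X⟧) = 1 + X :=
    isUnit_iff_constantCoeff.mpr (by simp)
  obtain ⟨i, p, rfl, hact⟩ := hasNormalForm hc (hu ▸ hb) g
  rw [hact] at h₁ h₂
  rcases eq_or_ne i 0 with rfl | hi
  · have hp : p = 0 := eq_zero_of_smeval_one_add_X_eq_zero hu (by simpa using h₁)
    exact absurd (by rw [hp, lampProd_zero, zpow_zero, one_mul]) hg
  · exact sub_eq_zero.mp (eq_zero_of_zpow_mul_eq_self hu hi (by linear_combination h₁ - h₂))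

end Lamplighter

theorem lamplighter_power_series_stabilizers_general (k : ℕ)
    (φ : Lamplighter k →* Equiv.Perm (PowerSeries (ZMod k)))
    (hc : ∀ F, φ (llc k) F = F + 1)
    (hb : ∀ F, φ (llb k) F = (1 + PowerSeries.X) * F) :
    Set.Countable {F : PowerSeries (ZMod k) | ∃ g : Lamplighter k, g ≠ 1 ∧ φ g F = F} := by
  have : Countable (Lamplighter k) := (PresentedGroup.mk_surjective _).countable
  rw [Set.ofPred_exists]
  exact Set.countable_iUnion fun g => Set.Subsingleton.countable fun F₁ h₁ F₂ h₂ =>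
    Lamplighter.eq_of_apply_eq_self_of_ne_one hc hb h₁.1 h₁.2 h₂.2

/-- For the action of the lamplighter group `L_k` on `ℤ/kℤ[[t]]` with
`c · F = F + 1` and `b · F = (1+t)·F`, all but countably many `F` have trivial
stabilizer: the set of `F` fixed by some nontrivial group element is countable. -/
theorem lamplighter_power_series_stabilizers (k : ℕ) (hk : 2 ≤ k)
    (φ : Lamplighter k →* Equiv.Perm (PowerSeries (ZMod k)))
    (hc : ∀ F, φ (llc k) F = F + 1)
    (hb : ∀ F, φ (llb k) F = (1 + PowerSeries.X) * F) :
    Set.Countable {F : PowerSeries (ZMod k) | ∃ g : Lamplighter k, g ≠ 1 ∧ φ g F = F} :=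
  lamplighter_power_series_stabilizers_general k φ hc hb
end

section
/- Let k ≥ 2, N ≥ 1 and M = Nl for some l ≥ 1. The oriented spider-web graph S_{k,N,Nl} is isomorphic, as an oriented graph, to the Cayley graph of the group G = (⊕_{i=1}^N ℤ/kℤ) ⋊ ℤ/Nlℤ (where ℤ/Nlℤ acts by cyclically shifting the N coordinates) with respect to the generating set {cⁱb : 0 ≤ i ≤ k−1}, where b generates ℤ/Nlℤ and c generates the first ℤ/kℤ coordinate. In particular, for M = N, S_{k,N,N} is a Cayley graph of the finite lamplighter group (ℤ/kℤ) ≀ (ℤ/Nℤ). -/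
/-- Cyclic shift by `a`, as an automorphism of `⊕_{ZMod N} ZMod k` written
multiplicatively. -/
def shiftMulAut (k N : ℕ) (a : ZMod N) : MulAut (Multiplicative (ZMod N → ZMod k)) where
  toFun f := Multiplicative.ofAdd fun j => Multiplicative.toAdd f (j - a)
  invFun f := Multiplicative.ofAdd fun j => Multiplicative.toAdd f (j + a)
  left_inv f := by simp
  right_inv f := by simp
  map_mul' f g := rfl

/-- The shift action of `ℤ/Nlℤ` on `⊕_{i=1}^N ℤ/kℤ` (written multiplicatively), via the
reduction `ℤ/Nlℤ → ℤ/Nℤ`. -/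
def shiftHom (k N l : ℕ) :
    Multiplicative (ZMod (N * l)) →* MulAut (Multiplicative (ZMod N → ZMod k)) where
  toFun a := shiftMulAut k N (ZMod.castHom (dvd_mul_right N l) (ZMod N) (Multiplicative.toAdd a))
  map_one' := by
    apply MulEquiv.ext
    intro f
    simp [shiftMulAut]
  map_mul' a b := by
    apply MulEquiv.ext
    intro f
    rw [MulAut.mul_apply]
    simp only [shiftMulAut, ZMod.castHom_apply, toAdd_mul, MulEquiv.coe_mk, Equiv.coe_fn_mk,
      toAdd_ofAdd, ZMod.cast_add (dvd_mul_right N l), sub_sub]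

/-- The group `(⊕_{i=1}^N ℤ/kℤ) ⋊ ℤ/Nlℤ`, where `ℤ/Nlℤ` acts by cyclically shifting
the `N` coordinates. -/
abbrev SpiderGroup (k N l : ℕ) :=
  SemidirectProduct (Multiplicative (ZMod N → ZMod k)) (Multiplicative (ZMod (N * l)))
    (shiftHom k N l)

/-- The generator `cⁱ·b` of `SpiderGroup k N l`, for `i ∈ {0,…,k−1}`: here `c` generates
the `0`-th coordinate `ℤ/kℤ` and `b` is the generator `1` of `ℤ/Nlℤ`. -/
def spiderGen (k N l : ℕ) (i : ZMod k) : SpiderGroup k N l :=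
  SemidirectProduct.inl (Multiplicative.ofAdd (Pi.single (0 : ZMod N) i)) *
    SemidirectProduct.inr (Multiplicative.ofAdd (1 : ZMod (N * l)))

/-- An oriented (multi)graph: vertices, edges, initial and terminal maps. -/
structure OGraph where
  V : Type
  E : Type
  ι : E → V
  τ : E → V

/-- Isomorphism of oriented graphs. -/
structure OGraph.Iso (G H : OGraph) where
  fV : G.V ≃ H.V
  fE : G.E ≃ H.E
  hι : ∀ e, H.ι (fE e) = fV (G.ι e)
  hτ : ∀ e, H.τ (fE e) = fV (G.τ e)

/-- The oriented right Cayley graph of a group with generators indexed by `f : X → G`. -/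
def cayleyO (G : Type) [Group G] {X : Type} (f : X → G) : OGraph where
  V := G
  E := G × X
  ι e := e.1
  τ e := e.1 * f e.2

/-- The oriented spider-web graph `S_{k,N,M}`: vertices `{0,…,k−1}^N × ℤ/Mℤ`, with an
edge from `(x₁…x_N, i)` to `(x₂…x_N y, i+1)` for each symbol `y : ZMod k`. -/
def spider (k N M : ℕ) : OGraph where
  V := (Fin N → ZMod k) × ZMod M
  E := ((Fin N → ZMod k) × ZMod M) × ZMod k
  ι e := e.1
  τ e := (fun j => if h : (j : ℕ) + 1 < N then e.1.1 ⟨(j : ℕ) + 1, h⟩ else e.2, e.1.2 + 1)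

/-!
A vertex `(x, i)` of the spider web goes to `b^i · x̃`, where `x̃ ∈ ⊕_{ZMod N} ZMod k` carries
the letter `x_j` at coordinate `j`. Right multiplication by `cʷb` adds `w` at coordinate `0` and
then, through the conjugation by `b`, moves every coordinate down by one: the first letter is
replaced by `x₁ + w` and rotated to the end. So the edge labelled `y` at `(x, i)` is sent to the
Cayley edge labelled `w = y - x₁`, and the Cayley graph's target is the spider's target.
-/

namespace SemidirectProduct

variable {N G : Type*} [Group N] [Group G] {φ : G →* MulAut N}

theorem inl_mul_inr_eq_inr_mul_inl (n : N) (g : G) :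
    (inl n * inr g : N ⋊[φ] G) = inr g * inl ((φ g)⁻¹ n) := by
  ext <;> simp

def inrMulInlEquiv : N × G ≃ N ⋊[φ] G where
  toFun p := inr p.2 * inl p.1
  invFun x := ((φ x.right)⁻¹ x.left, x.right)
  left_inv p := by ext <;> simp
  right_inv x := by ext <;> simp

end SemidirectProduct

def shiftIn {α : Type*} {N : ℕ} (x : Fin N → α) (y : α) : Fin N → α :=
  fun j => if h : (j : ℕ) + 1 < N then x ⟨j + 1, h⟩ else y

theorem update_zero_apply_add_one_eq_shiftIn {α : Type*} {N : ℕ} [NeZero N] (x : Fin N → α)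
    (y : α) (j : Fin N) : Function.update x 0 y (j + 1) = shiftIn x y j := by
  obtain ⟨n, rfl⟩ := Nat.exists_eq_succ_of_ne_zero (NeZero.ne N)
  induction j using Fin.lastCases with
  | last => simp [shiftIn]
  | cast i =>
    rw [Fin.coeSucc_eq_succ, Function.update_of_ne (Fin.succ_ne_zero i), shiftIn,
      dif_pos (by simp)]
    rfl

theorem shiftHom_inv_apply {k N : ℕ} (l : ℕ) (a : Multiplicative (ZMod (N * l)))
    (f : Multiplicative (ZMod N → ZMod k)) :
    (shiftHom k N l a)⁻¹ f =
      .ofAdd fun j => f.toAdd (j + ZMod.castHom (dvd_mul_right N l) (ZMod N) a.toAdd) := rfl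

section Spider

variable {k N : ℕ} [NeZero N]

variable (k N) in
def wordEquiv : (Fin N → ZMod k) ≃ Multiplicative (ZMod N → ZMod k) :=
  ((ZMod.finEquiv N).toEquiv.arrowCongr (Equiv.refl _)).trans Multiplicative.ofAdd

theorem toAdd_wordEquiv_apply (x : Fin N → ZMod k) (j : ZMod N) :
    (wordEquiv k N x).toAdd j = x ((ZMod.finEquiv N).symm j) :=
  rfl

theorem wordEquiv_shiftIn (x : Fin N → ZMod k) (y : ZMod k) :
    wordEquiv k N (shiftIn x y) =
      .ofAdd fun j => Function.update (wordEquiv k N x).toAdd 0 y (j + 1) := by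
  ext j
  obtain ⟨j, rfl⟩ := (ZMod.finEquiv N).surjective j
  rw [toAdd_ofAdd, ← map_one (ZMod.finEquiv N), ← map_add]
  simp only [toAdd_wordEquiv_apply, Function.update_apply,
    EmbeddingLike.map_eq_zero_iff, RingEquiv.symm_apply_apply]
  rw [← Function.update_apply, update_zero_apply_add_one_eq_shiftIn]

variable (k N) in
def vertexEquiv (l : ℕ) : (Fin N → ZMod k) × ZMod (N * l) ≃ SpiderGroup k N l :=
  (Equiv.prodCongr (wordEquiv k N) Multiplicative.ofAdd).trans SemidirectProduct.inrMulInlEquiv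

theorem vertexEquiv_mul_spiderGen (l : ℕ) (x : Fin N → ZMod k) (i : ZMod (N * l)) (y : ZMod k) :
    vertexEquiv k N l (x, i) * spiderGen k N l (y - x 0) =
      vertexEquiv k N l (shiftIn x y, i + 1) := by
  simp only [vertexEquiv, SemidirectProduct.inrMulInlEquiv, spiderGen, Equiv.trans_apply,
    Equiv.prodCongr_apply, Prod.map, Equiv.coe_fn_mk]
  rw [mul_assoc, ← mul_assoc (SemidirectProduct.inl _), ← map_mul,
    SemidirectProduct.inl_mul_inr_eq_inr_mul_inl, ← mul_assoc, ← map_mul, wordEquiv_shiftIn]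
  congr 2
  rw [shiftHom_inv_apply, toAdd_ofAdd, map_one]
  congr 1
  funext j
  have hx0 : x 0 = (wordEquiv k N x).toAdd 0 := by
    rw [toAdd_wordEquiv_apply, map_zero]
  simp only [toAdd_ofAdd, toAdd_mul, hx0, Pi.update_eq_sub_add_single, Pi.single_sub,
    Pi.add_apply, Pi.sub_apply]
  abel

end Spider

theorem spider_iso_cayley_semidirect_general (k N l : ℕ) (hN : 1 ≤ N) :
    Nonempty (OGraph.Iso (spider k N (N * l))
      (cayleyO (SpiderGroup k N l) (spiderGen k N l))) := by
  have : NeZero N := NeZero.of_pos hN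
  exact ⟨{ fV := vertexEquiv k N l
           fE := (vertexEquiv k N l).prodShear fun v => Equiv.subRight (v.1 0)
           hι := fun _ => rfl
           hτ := fun e => vertexEquiv_mul_spiderGen l e.1.1 e.1.2 e.2 }⟩

/-- For `k ≥ 2`, `N ≥ 1` and `M = N·l`, the oriented spider-web graph
`S_{k,N,Nl}` is isomorphic, as an oriented graph, to the Cayley graph of
`(⊕_{i=1}^N ℤ/kℤ) ⋊ ℤ/Nlℤ` (shift action) with respect to the generating set
`{cⁱb : 0 ≤ i ≤ k−1}`.  (In particular, for `l = 1` it is a Cayley graph of the finite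
lamplighter group `ℤ/kℤ ≀ ℤ/Nℤ`.) -/
theorem spider_iso_cayley_semidirect (k N l : ℕ) (hk : 2 ≤ k) (hN : 1 ≤ N) (hl : 1 ≤ l) :
    Nonempty (OGraph.Iso (spider k N (N * l))
      (cayleyO (SpiderGroup k N l) (spiderGen k N l))) :=
  spider_iso_cayley_semidirect_general k N l hN
end
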